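/- Let W be a nonzero restricted H_I-module of level 1 on which each p_i acts locally finitely (i.e., W belongs to the category F). Then there exists a nonzero vector w_0 ∈ W and a finitely supported function λ: I → ℂ such that p_i w_0 = λ_i w_0 for all i ∈ I; moreover the H_I-submodule generated by w_0 is isomorphic to M(1,λ). -/

import Mathlib

/-!
Commuting locally finite operators have a common eigenvector in every nonzero subspace they
all preserve: an eigenvector of one operator exists inside a finite-dimensional stable subspace,
and its eigenspace is preserved by the others. In a restricted module the joint kernel of all but
finitely many `p_i` is such a subspace, which yields `w₀` with `p_i w₀ = λ_i w₀`, `λ` finitely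
supported. By `[p_i, f(q)] = (∂f/∂x_i)(q)` the map `f ↦ f(q) w₀` intertwines `M(1,λ)` with `W`;
its kernel is stable under every `∂/∂x_i` and does not contain `1`, hence is zero.
-/

/-- A level-one module for the Heisenberg Lie algebra `H_I` with basis
`{p_i, q_i, k | i ∈ I}`, relations `[p_i, q_j] = δ_{ij} k`, all other brackets zero,
where the central element `k` acts as the identity. -/
structure HeisenbergRep (I : Type) (W : Type) [AddCommGroup W] [Module ℂ W] where
  p : I → Module.End ℂ W
  q : I → Module.End ℂ W
  comm_pp : ∀ i j, Commute (p i) (p j)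
  comm_qq : ∀ i j, Commute (q i) (q j)
  comm_pq_same : ∀ i, p i * q i - q i * p i = 1
  comm_pq_ne : ∀ i j, i ≠ j → Commute (p i) (q j)

namespace HeisenbergRep

variable {I : Type} {W : Type} [AddCommGroup W] [Module ℂ W]

/-- A submodule stable under all the Heisenberg operators. -/
def Stable (ρ : HeisenbergRep I W) (S : Submodule ℂ W) : Prop :=
  (∀ i, ∀ w ∈ S, ρ.p i w ∈ S) ∧ (∀ i, ∀ w ∈ S, ρ.q i w ∈ S)

/-- `S` is a nonzero stable submodule with no proper nonzero stable submodule. -/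
def IsSimpleSub (ρ : HeisenbergRep I W) (S : Submodule ℂ W) : Prop :=
  ρ.Stable S ∧ S ≠ ⊥ ∧ ∀ T : Submodule ℂ W, ρ.Stable T → T ≤ S → T = ⊥ ∨ T = S

/-- Irreducibility of the representation. -/
def IsIrreducible (ρ : HeisenbergRep I W) : Prop := ρ.IsSimpleSub ⊤

/-- Restricted: for each vector `w`, `p_i w = 0` for all but finitely many `i`. -/
def Restricted (ρ : HeisenbergRep I W) : Prop :=
  ∀ w : W, {i : I | ρ.p i w ≠ 0}.Finite

/-- Isomorphism of Heisenberg representations. -/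
def Iso {W' : Type} [AddCommGroup W'] [Module ℂ W']
    (ρ : HeisenbergRep I W) (ρ' : HeisenbergRep I W') : Prop :=
  ∃ e : W ≃ₗ[ℂ] W', (∀ i w, e (ρ.p i w) = ρ'.p i (e w)) ∧
    (∀ i w, e (ρ.q i w) = ρ'.q i (e w))

end HeisenbergRep

/-- An endomorphism is locally finite if every vector lies in a
finitely generated (equivalently, finite-dimensional) stable subspace. -/
def Module.End.LocallyFinite {W : Type} [AddCommGroup W] [Module ℂ W]
    (T : Module.End ℂ W) : Prop :=
  ∀ w : W, ∃ S : Submodule ℂ W, w ∈ S ∧ S.FG ∧ ∀ v ∈ S, T v ∈ S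

/-- An endomorphism is locally nilpotent if every vector is killed by some power. -/
def Module.End.LocallyNilpotent {W : Type} [AddCommGroup W] [Module ℂ W]
    (T : Module.End ℂ W) : Prop :=
  ∀ w : W, ∃ n : ℕ, (T ^ n) w = 0

/-- The category `F`: restricted level-one modules on which every `p_i` is locally finite. -/
def HeisenbergRep.InCategoryF {I W : Type} [AddCommGroup W] [Module ℂ W]
    (ρ : HeisenbergRep I W) : Prop :=
  ρ.Restricted ∧ ∀ i, (ρ.p i).LocallyFinite

section M1

open MvPolynomial

variable {I : Type}

lemma pderiv_comm' [DecidableEq I] (i j : I) (f : MvPolynomial I ℂ) :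
    pderiv i (pderiv j f) = pderiv j (pderiv i f) := by
  induction f using MvPolynomial.induction_on' with
  | monomial s a =>
      simp only [pderiv_monomial]
      by_cases hij : i = j
      · subst hij; rfl
      · have h1 : ((s - Finsupp.single j 1 : I →₀ ℕ)) i = s i := by
          rw [Finsupp.tsub_apply, Finsupp.single_eq_of_ne hij, tsub_zero]
        have h2 : ((s - Finsupp.single i 1 : I →₀ ℕ)) j = s j := by
          rw [Finsupp.tsub_apply, Finsupp.single_eq_of_ne (Ne.symm hij), tsub_zero]
        rw [h1, h2, tsub_tsub, tsub_tsub, add_comm (Finsupp.single j 1)]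
        ring_nf
  | add p q hp hq => simp [hp, hq]

/-- The module `M(1,λ) = e^{λx} ℂ[x_i | i ∈ I]`, modelled on the polynomial ring
(`e^{λx} f ↔ f`), with `p_i = ∂/∂x_i` (which becomes `∂/∂x_i + λ_i` on the polynomial
part), `q_i` multiplication by `x_i`, and `k = 1`. -/
noncomputable def M1rep [DecidableEq I] (lam : I →₀ ℂ) :
    HeisenbergRep I (MvPolynomial I ℂ) where
  p i := (pderiv i).toLinearMap + lam i • (1 : Module.End ℂ (MvPolynomial I ℂ))
  q i := LinearMap.mulLeft ℂ (X i)
  comm_pp i j := by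
    apply LinearMap.ext; intro f
    simp [Module.End.mul_apply, pderiv_comm' i j, smul_eq_C_mul]
    ring
  comm_qq i j := by
    apply LinearMap.ext; intro f
    simp [Module.End.mul_apply]
    ring
  comm_pq_same i := by
    apply LinearMap.ext; intro f
    simp [Module.End.mul_apply, pderiv_mul, smul_eq_C_mul]
    ring
  comm_pq_ne i j hij := by
    apply LinearMap.ext; intro f
    simp [Module.End.mul_apply, pderiv_mul, pderiv_X_of_ne (Ne.symm hij), smul_eq_C_mul]
    ring

end M1

section CommonEigenvector

variable {ι V : Type} [AddCommGroup V] [Module ℂ V]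

open Module.End

theorem Module.End.LocallyFinite.exists_eigenvector_mem {T : Module.End ℂ V}
    (hT : Module.End.LocallyFinite T) {U : Submodule ℂ V} (hU : U ≠ ⊥) (hUT : ∀ v ∈ U, T v ∈ U) :
    ∃ c : ℂ, ∃ v ∈ U, v ≠ 0 ∧ T v = c • v := by
  obtain ⟨u, huU, hu0⟩ := (Submodule.ne_bot_iff U).mp hU
  obtain ⟨S, huS, hSfg, hST⟩ := hT u
  have hSUT : ∀ v ∈ S ⊓ U, T v ∈ S ⊓ U := fun v hv => ⟨hST v hv.1, hUT v hv.2⟩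
  have := (Submodule.fg_iff_finiteDimensional S).mp hSfg
  have : FiniteDimensional ℂ ↥(S ⊓ U) := Submodule.finiteDimensional_of_le inf_le_left
  have : Nontrivial ↥(S ⊓ U) :=
    Submodule.nontrivial_iff_ne_bot.mpr ((Submodule.ne_bot_iff _).mpr ⟨u, ⟨huS, huU⟩, hu0⟩)
  obtain ⟨c, hc⟩ := exists_eigenvalue (T.restrict hSUT)
  obtain ⟨v, hv, hv0⟩ := hc.exists_hasEigenvector
  refine ⟨c, v, v.2.2, fun h => hv0 (Subtype.ext h), ?_⟩
  simpa using congrArg Subtype.val (mem_eigenspace_iff.mp hv)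

theorem exists_common_eigenvector_of_commute (T : ι → Module.End ℂ V)
    (hcomm : ∀ i j, Commute (T i) (T j)) (hT : ∀ i, Module.End.LocallyFinite (T i)) (J : Finset ι)
    {U : Submodule ℂ V} (hU : U ≠ ⊥) (hUT : ∀ j ∈ J, ∀ v ∈ U, T j v ∈ U) :
    ∃ v ∈ U, v ≠ 0 ∧ ∀ j ∈ J, ∃ c : ℂ, T j v = c • v := by
  classical
  induction J using Finset.induction_on generalizing U with
  | empty =>
    obtain ⟨v, hv, hv0⟩ := (Submodule.ne_bot_iff U).mp hU
    exact ⟨v, hv, hv0, by simp⟩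
  | insert j J _ ih =>
    obtain ⟨c, u, huU, hu0, hu⟩ :=
      (hT j).exists_eigenvector_mem hU (hUT j (Finset.mem_insert_self j J))
    have hE : U ⊓ (T j).eigenspace c ≠ ⊥ :=
      (Submodule.ne_bot_iff _).mpr ⟨u, ⟨huU, mem_eigenspace_iff.mpr hu⟩, hu0⟩
    have hET : ∀ k ∈ J, ∀ v ∈ U ⊓ (T j).eigenspace c, T k v ∈ U ⊓ (T j).eigenspace c :=
      fun k hk v hv => ⟨hUT k (Finset.mem_insert_of_mem hk) v hv.1,
        mapsTo_genEigenspace_of_comm (hcomm j k) c 1 hv.2⟩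
    obtain ⟨v, ⟨hvU, hvE⟩, hv0, hvJ⟩ := ih hE hET
    exact ⟨v, hvU, hv0, (Finset.forall_mem_insert _ _ _).mpr
      ⟨⟨c, mem_eigenspace_iff.mp hvE⟩, hvJ⟩⟩

theorem exists_simultaneous_eigenvector_of_commute (T : ι → Module.End ℂ V)
    (hcomm : ∀ i j, Commute (T i) (T j)) (hT : ∀ i, Module.End.LocallyFinite (T i))
    (hfin : ∀ v, {i | T i v ≠ 0}.Finite) {w : V} (hw : w ≠ 0) :
    ∃ v : V, v ≠ 0 ∧ ∃ c : ι →₀ ℂ, ∀ i, T i v = c i • v := by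
  classical
  set J := (hfin w).toFinset
  let N : Submodule ℂ V := ⨅ i ∈ (↑J : Set ι)ᶜ, LinearMap.ker (T i)
  have hmemN : ∀ v, v ∈ N ↔ ∀ i ∉ J, T i v = 0 := by
    intro v; simp [N, Submodule.mem_iInf]
  have hwN : w ∈ N := (hmemN w).mpr fun i hi => by simpa [J] using hi
  have hNT : ∀ k, ∀ v ∈ N, T k v ∈ N := by
    intro k v hv
    rw [hmemN] at hv ⊢
    intro i hi
    rw [← Module.End.mul_apply, (hcomm i k).eq, Module.End.mul_apply, hv i hi, map_zero]
  obtain ⟨v, hvN, hv0, hvJ⟩ := exists_common_eigenvector_of_commute T hcomm hT J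
    ((Submodule.ne_bot_iff N).mpr ⟨w, hwN, hw⟩) fun k _ => hNT k
  choose c hc using hvJ
  refine ⟨v, hv0, Finsupp.indicator J c, fun i => ?_⟩
  by_cases hi : i ∈ J
  · simpa [Finsupp.indicator_apply, hi] using hc i hi
  · simpa [Finsupp.indicator_apply, hi] using (hmemN v).mp hvN i hi

end CommonEigenvector

namespace MvPolynomial

variable {σ R : Type*}

theorem totalDegree_pderiv_lt [CommSemiring R] {i : σ} {f : MvPolynomial σ R}
    (h : pderiv i f ≠ 0) : (pderiv i f).totalDegree < f.totalDegree := by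
  classical
  have hdeg : ∀ s ∈ (pderiv i f).support, (s.sum fun _ e => e) + 1 ≤ f.totalDegree := by
    intro s hs
    rw [mem_support_iff, coeff_pderiv] at hs
    calc (s.sum fun _ e => e) + 1 = (s + Finsupp.single i 1).sum fun _ e => e := by
          rw [Finsupp.sum_add_index' (fun _ => rfl) (fun _ _ _ => rfl),
            Finsupp.sum_single_index rfl]
      _ ≤ f.totalDegree := le_totalDegree (mem_support_iff.mpr (left_ne_zero_of_mul hs))
  obtain ⟨s₀, hs₀⟩ := support_nonempty.mpr h
  rw [totalDegree, Finset.sup_lt_iff (Nat.zero_lt_of_lt (hdeg s₀ hs₀))]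
  exact fun s hs => hdeg s hs

theorem eq_C_of_forall_pderiv_eq_zero [CommSemiring R] [NoZeroDivisors R] [CharZero R]
    {f : MvPolynomial σ R} (h : ∀ i, pderiv i f = 0) : f = C (coeff 0 f) := by
  classical
  ext s
  rw [coeff_C]
  split_ifs with hs
  · rw [hs]
  obtain ⟨i, hi⟩ : ∃ i, s i ≠ 0 := by
    by_contra! hc
    exact hs (Finsupp.ext hc).symm
  have hcoeff := coeff_pderiv (i := i) f (s - Finsupp.single i 1)
  rw [h i, tsub_add_cancel_of_le (Finsupp.single_le_iff.mpr (Nat.one_le_iff_ne_zero.mpr hi)),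
    coeff_zero] at hcoeff
  exact (mul_eq_zero.mp hcoeff.symm).resolve_right (Nat.cast_add_one_ne_zero _)

theorem one_mem_of_pderiv_mem {K : Type*} [Field K] [CharZero K]
    {S : Submodule K (MvPolynomial σ K)} (hS : ∀ i, ∀ f ∈ S, pderiv i f ∈ S)
    {f : MvPolynomial σ K} (hfS : f ∈ S) (hf : f ≠ 0) : (1 : MvPolynomial σ K) ∈ S := by
  induction hd : f.totalDegree using Nat.strong_induction_on generalizing f with
  | _ n ih =>
    by_cases hder : ∃ i, pderiv i f ≠ 0
    · obtain ⟨i, hi⟩ := hder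
      exact ih _ (hd ▸ totalDegree_pderiv_lt hi) (hS i f hfS) hi rfl
    push Not at hder
    obtain ⟨a, rfl⟩ : ∃ a, f = C a := ⟨_, eq_C_of_forall_pderiv_eq_zero hder⟩
    have ha : a ≠ 0 := fun ha => hf (by rw [ha, C_0])
    have h1 : (1 : MvPolynomial σ K) = a⁻¹ • C a := by
      rw [smul_eq_C_mul, ← C_mul, inv_mul_cancel₀ ha, C_1]
    exact h1 ▸ S.smul_mem _ hfS

variable {A : Type*} [CommSemiring R] [Semiring A] [Algebra R A]

open scoped IsMulCommutative in
/-- `aeval` needs a commutative target, so evaluate in the commutative subalgebra generated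
by `x`. -/
noncomputable def aevalOfCommute (x : σ → A) (hx : ∀ i j, Commute (x i) (x j)) :
    MvPolynomial σ R →ₐ[R] A :=
  have := Algebra.isMulCommutative_adjoin R (s := Set.range x) <| by
    rintro _ ⟨i, rfl⟩ _ ⟨j, rfl⟩
    exact (hx i j).eq
  (Algebra.adjoin R (Set.range x)).val.comp (aeval fun i => ⟨x i, Algebra.subset_adjoin ⟨i, rfl⟩⟩)

@[simp]
theorem aevalOfCommute_X (x : σ → A) (hx : ∀ i j, Commute (x i) (x j)) (i : σ) :
    aevalOfCommute (R := R) x hx (X i) = x i := by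
  simp [aevalOfCommute]

end MvPolynomial

namespace HeisenbergRep

open MvPolynomial

variable {I W : Type} [AddCommGroup W] [Module ℂ W] (ρ : HeisenbergRep I W)

noncomputable def qEval : MvPolynomial I ℂ →ₐ[ℂ] Module.End ℂ W :=
  aevalOfCommute ρ.q ρ.comm_qq

theorem p_mul_qEval (i : I) (f : MvPolynomial I ℂ) :
    ρ.p i * ρ.qEval f = ρ.qEval f * ρ.p i + ρ.qEval (pderiv i f) := by
  induction f using MvPolynomial.induction_on with
  | C a => simp [qEval, Algebra.commutes]
  | add f g hf hg => simp only [map_add, mul_add, add_mul, hf, hg]; abel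
  | mul_X f j hf =>
    have hX : ρ.qEval (X j) = ρ.q j := aevalOfCommute_X _ _ j
    rw [map_mul, hX, ← mul_assoc, hf, add_mul, mul_assoc, pderiv_mul, map_add, map_mul,
      map_mul, hX]
    by_cases hij : i = j
    · subst hij
      rw [sub_eq_iff_eq_add.mp (ρ.comm_pq_same i), pderiv_X_self, map_one]
      noncomm_ring
    · rw [(ρ.comm_pq_ne i j hij).eq, pderiv_X_of_ne (Ne.symm hij), map_zero]
      noncomm_ring

variable (w : W)

noncomputable def qEvalAt : MvPolynomial I ℂ →ₗ[ℂ] W :=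
  LinearMap.applyₗ w ∘ₗ ρ.qEval.toLinearMap

theorem qEvalAt_apply (f : MvPolynomial I ℂ) : ρ.qEvalAt w f = ρ.qEval f w := rfl

theorem qEvalAt_C (a : ℂ) : ρ.qEvalAt w (C a) = a • w := by
  simp [qEvalAt_apply, qEval]

theorem qEvalAt_one : ρ.qEvalAt w 1 = w := by
  simpa using ρ.qEvalAt_C w 1

theorem qEvalAt_X_mul (i : I) (f : MvPolynomial I ℂ) :
    ρ.qEvalAt w (X i * f) = ρ.q i (ρ.qEvalAt w f) := by
  simp [qEvalAt_apply, qEval]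

variable {ρ w} {lam : I → ℂ}

theorem p_qEvalAt (hw : ∀ i, ρ.p i w = lam i • w) (i : I) (f : MvPolynomial I ℂ) :
    ρ.p i (ρ.qEvalAt w f) = ρ.qEvalAt w (pderiv i f + lam i • f) := by
  rw [qEvalAt_apply, ← Module.End.mul_apply, p_mul_qEval, LinearMap.add_apply,
    Module.End.mul_apply, hw, map_smul, map_add, map_smul, qEvalAt_apply, qEvalAt_apply, add_comm]

theorem qEvalAt_injective (hw : ∀ i, ρ.p i w = lam i • w) (hw0 : w ≠ 0) :
    Function.Injective (ρ.qEvalAt w) := by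
  rw [← LinearMap.ker_eq_bot, Submodule.eq_bot_iff]
  intro f hf
  by_contra hf0
  have hker : ∀ i, ∀ g ∈ LinearMap.ker (ρ.qEvalAt w),
      pderiv i g ∈ LinearMap.ker (ρ.qEvalAt w) := by
    intro i g hg
    rw [LinearMap.mem_ker] at hg ⊢
    have h := p_qEvalAt hw i g
    rwa [hg, map_zero, map_add, map_smul, hg, smul_zero, add_zero, eq_comm] at h
  exact hw0 (by simpa [qEvalAt_one] using one_mem_of_pderiv_mem hker hf hf0)

theorem range_qEvalAt (hw : ∀ i, ρ.p i w = lam i • w) :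
    LinearMap.range (ρ.qEvalAt w) = sInf {S | ρ.Stable S ∧ w ∈ S} := by
  apply le_antisymm
  · refine le_sInf fun S ⟨⟨_, hSq⟩, hwS⟩ => ?_
    rintro _ ⟨f, rfl⟩
    induction f using MvPolynomial.induction_on with
    | C a => simpa [qEvalAt_C] using S.smul_mem a hwS
    | add f g hf hg => rw [map_add]; exact S.add_mem hf hg
    | mul_X f j hf => rw [mul_comm, qEvalAt_X_mul]; exact hSq j _ hf
  · refine sInf_le ⟨⟨?_, ?_⟩, 1, ρ.qEvalAt_one w⟩
    · rintro i _ ⟨f, rfl⟩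
      exact ⟨_, (p_qEvalAt hw i f).symm⟩
    · rintro i _ ⟨f, rfl⟩
      exact ⟨_, ρ.qEvalAt_X_mul w i f⟩

end HeisenbergRep

section M1rep

open MvPolynomial

variable {I : Type} [DecidableEq I] (lam : I →₀ ℂ)

theorem M1rep_p_apply (i : I) (f : MvPolynomial I ℂ) :
    (M1rep lam).p i f = pderiv i f + lam i • f := by
  simp [M1rep]

theorem M1rep_q_apply (i : I) (f : MvPolynomial I ℂ) : (M1rep lam).q i f = X i * f := rfl

end M1rep

open HeisenbergRep in
/-- Every nonzero `H_I`-module in the category `F` (restricted of level one, with every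
`p_i` locally finite) contains a nonzero simultaneous eigenvector `w₀` for the `p_i`,
with finitely supported eigenvalue function `λ`; moreover the submodule generated by
`w₀` is isomorphic to `M(1,λ)`. -/
theorem categoryF_eigenvector_and_M1_submodule
    {I W : Type} [DecidableEq I] [AddCommGroup W] [Module ℂ W]
    (ρ : HeisenbergRep I W) (hF : ρ.InCategoryF) (hW : ∃ w : W, w ≠ 0) :
    ∃ w₀ : W, w₀ ≠ 0 ∧ ∃ lam : I →₀ ℂ,
      (∀ i, ρ.p i w₀ = lam i • w₀) ∧
      ∃ e : MvPolynomial I ℂ →ₗ[ℂ] W, Function.Injective e ∧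
        (∀ i f, e ((M1rep lam).p i f) = ρ.p i (e f)) ∧
        (∀ i f, e ((M1rep lam).q i f) = ρ.q i (e f)) ∧
        LinearMap.range e = sInf {S : Submodule ℂ W | ρ.Stable S ∧ w₀ ∈ S} := by
  obtain ⟨w, hw⟩ := hW
  obtain ⟨w₀, hw₀, lam, hlam⟩ :=
    exists_simultaneous_eigenvector_of_commute ρ.p ρ.comm_pp hF.2 hF.1 hw
  refine ⟨w₀, hw₀, lam, hlam, ρ.qEvalAt w₀, qEvalAt_injective hlam hw₀, fun i f => ?_,
    fun i f => ?_, range_qEvalAt hlam⟩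
  · rw [M1rep_p_apply, p_qEvalAt hlam]
  · rw [M1rep_q_apply, qEvalAt_X_mul]
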